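/- arXiv:1704.06981 — 6 statements merged into one kernel-verified Lean document; each statement's English description precedes it below -/
import Mathlib

section
/- For every integer m ≥ 0 and complex a, b, z with |z| < 1, z ≠ 0, one has (a−m)_m · (b−m)_m · 𝐅(a, b; 1+m; z) = z^{-m} · 𝐅(a−m, b−m; 1−m; z). -/
open Complex

/-- Pochhammer symbol `(a)ₙ = a(a+1)⋯(a+n−1)`. -/
noncomputable def poch (a : ℂ) (n : ℕ) : ℂ := (ascPochhammer ℂ n).eval a

/-- The normalized ₂F₁ (Gauss hypergeometric) function
`𝐅(a, b; c; z) = ∑ (a)ₙ(b)ₙ zⁿ/(Γ(c+n)·n!)`, convergent for `|z| < 1`. -/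
noncomputable def nF2 (a b c z : ℂ) : ℂ :=
  ∑' n : ℕ, poch a n * poch b n * z ^ n / (Complex.Gamma (c + n) * n.factorial)

/-!
For `n < m` the coefficient `1 / Γ(1 - m + n)` vanishes, so the series of `𝐅(a - m, b - m; 1 - m; z)`
really starts at `n = m`. Substituting `n = m + k` and splitting
`(a - m)_{m + k} = (a - m)_m (a)_k`, `Γ(1 + m + k) = (m + k)!`, `Γ(1 + k) = k!`, `z^{m + k} = z^m z^k`,
the shifted series is `z^m (a - m)_m (b - m)_m 𝐅(a, b; 1 + m; z)` term by term.
-/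

noncomputable def nF2Term (a b c z : ℂ) (n : ℕ) : ℂ :=
  poch a n * poch b n * z ^ n / (Gamma (c + n) * n.factorial)

lemma nF2_eq_tsum_nF2Term (a b c z : ℂ) : nF2 a b c z = ∑' n, nF2Term a b c z n := rfl

lemma poch_add (x : ℂ) (n k : ℕ) : poch x (n + k) = poch x n * poch (x + n) k := by
  simp only [poch, ← ascPochhammer_mul, Polynomial.eval_mul, Polynomial.eval_comp,
    Polynomial.eval_add, Polynomial.eval_X, Polynomial.eval_natCast]

lemma tsum_nat_add_left_of_eq_zero {M : Type*} [AddCommMonoid M] [TopologicalSpace M]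
    {f : ℕ → M} {m : ℕ} (hf : ∀ n < m, f n = 0) : ∑' k, f (m + k) = ∑' n, f n := by
  refine Function.Injective.tsum_eq (g := fun k => m + k) (add_right_injective m) fun n hn => ?_
  by_cases hnm : n < m
  · exact absurd (hf n hnm) hn
  · exact ⟨n - m, Nat.add_sub_cancel' (not_lt.mp hnm)⟩

lemma Gamma_one_sub_add_eq_zero {m n : ℕ} (h : n < m) : Gamma (1 - m + n) = 0 := by
  have : (1 : ℂ) - m + n = -((m - 1 - n : ℕ) : ℂ) := by
    push_cast [Nat.cast_sub (by omega : n ≤ m - 1), Nat.cast_sub (by omega : 1 ≤ m)]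
    ring
  rw [this, Gamma_neg_nat_eq_zero]

lemma nF2Term_one_sub_eq_zero (a b z : ℂ) {m n : ℕ} (h : n < m) :
    nF2Term a b (1 - m) z n = 0 := by
  rw [nF2Term, Gamma_one_sub_add_eq_zero h, zero_mul, div_zero]

lemma poch_mul_poch_mul_nF2Term_one_add (a b : ℂ) {z : ℂ} (hz : z ≠ 0) (m k : ℕ) :
    poch (a - m) m * poch (b - m) m * nF2Term a b (1 + m) z k
      = z ^ (-(m : ℤ)) * nF2Term (a - m) (b - m) (1 - m) z (m + k) := by
  have hGamma_left : Gamma (1 + m + k) = (m + k).factorial := by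
    rw [← Gamma_nat_eq_factorial]; push_cast; ring_nf
  have hGamma_right : Gamma (1 - m + (m + k : ℕ)) = k.factorial := by
    rw [← Gamma_nat_eq_factorial]; push_cast; ring_nf
  simp only [nF2Term, hGamma_left, hGamma_right, poch_add, sub_add_cancel, zpow_neg,
    zpow_natCast, pow_add]
  have hzm : z ^ m ≠ 0 := pow_ne_zero _ hz
  field_simp

theorem nF2_degenerate_general (m : ℕ) (a b z : ℂ) (hz0 : z ≠ 0) :
    poch (a - m) m * poch (b - m) m * nF2 a b (1 + m) z
      = z ^ (-(m : ℤ)) * nF2 (a - m) (b - m) (1 - m) z := by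
  rw [nF2_eq_tsum_nF2Term, nF2_eq_tsum_nF2Term,
    ← tsum_nat_add_left_of_eq_zero fun n => nF2Term_one_sub_eq_zero (a - m) (b - m) z,
    ← tsum_mul_left, ← tsum_mul_left]
  exact tsum_congr (poch_mul_poch_mul_nF2Term_one_add a b hz0 m)

theorem nF2_degenerate (m : ℕ) (a b z : ℂ) (hz1 : ‖z‖ < 1) (hz0 : z ≠ 0) :
    poch (a - m) m * poch (b - m) m * nF2 a b (1 + m) z
      = z ^ (-(m : ℤ)) * nF2 (a - m) (b - m) (1 - m) z :=
  nF2_degenerate_general m a b z hz0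
end

section
/- For integers m ≥ 0, the function 𝐃_m(z) := ∑_{k=1}^m (−1)^{k−1} (k−1)!/(m−k)! · z^{−k} − ∑_{k=0}^∞ (ψ(k+1)+ψ(k+m+1))/(k!(m+k)!) · z^k satisfies the inhomogeneous equation z·𝐃_m''(z) + (m+1)·𝐃_m'(z) − 𝐃_m(z) = −(m/z)·𝐅_m(z) − 2·𝐅_m'(z) for z ≠ 0. -/
open Complex

/-- The digamma function `ψ = Γ'/Γ`. -/
noncomputable def digamma (z : ℂ) : ℂ := deriv Complex.Gamma z / Complex.Gamma z

/-- The normalized ₀F₁ function with integer parameter: `𝐅_m(z) = ∑ zⁿ/((m+n)!·n!)`. -/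
noncomputable def Fm (m : ℕ) (z : ℂ) : ℂ :=
  ∑' n : ℕ, z ^ n / ((m + n).factorial * n.factorial)

/-- `𝐃_m(z) = ∑_{k=1}^m (−1)^{k−1}(k−1)!/(m−k)!·z^{−k}
      − ∑_{k≥0} (ψ(k+1)+ψ(k+m+1))/(k!(m+k)!)·z^k`. -/
noncomputable def Dm (m : ℕ) (z : ℂ) : ℂ :=
  (∑ k ∈ Finset.Icc 1 m,
      (-1 : ℂ) ^ (k - 1) * (k - 1).factorial / (m - k).factorial * z ^ (-(k : ℤ)))
  - ∑' k : ℕ, (_root_.digamma (k + 1) + _root_.digamma (k + m + 1)) / (k.factorial * (m + k).factorial) * z ^ k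

/-!
Write `𝐃_m = P - S`, with `P` the polar part and `S = ∑ cₖ zᵏ`, and let
`L f = z f'' + (m+1) f' - f`, the operator annihilating `𝐅_m`.
On `z^{-k}`, `L` gives `k(k-m) z^{-k-1} - z^{-k}`; the coefficients of `P` are exactly those for
which these telescope, leaving `L P = -(m/m!) z⁻¹`. On a power series `∑ aₙ zⁿ`, `L` acts on
coefficients by `aₙ ↦ (n+1)(n+m+1) aₙ₊₁ - aₙ`, which vanishes on the coefficients `bₙ` of `𝐅_m`.
Since `cₙ = (ψ(n+1) + ψ(n+m+1)) bₙ`, the recurrence `ψ(x+1) = ψ(x) + 1/x` makes `L S` the series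
with coefficients `(1/(n+1) + 1/(n+m+1)) bₙ = (m + 2(n+1)) bₙ₊₁`, which is the power series part
of `-(m/z) 𝐅_m - 2 𝐅_m'`; the remaining term `-(m/z) b₀` matches `L P`.
-/

open Filter Topology

theorem digamma_natCast_add_one_add_one (n : ℕ) :
    _root_.digamma ((n : ℂ) + 1 + 1) = _root_.digamma ((n : ℂ) + 1) + ((n : ℂ) + 1)⁻¹ := by
  refine Complex.digamma_apply_add_one _ fun j h => ?_
  have := congrArg Complex.re h
  simp only [add_re, natCast_re, one_re, neg_re] at this
  linarith [(Nat.cast_nonneg j : (0 : ℝ) ≤ j), (Nat.cast_nonneg n : (0 : ℝ) ≤ n)]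

theorem norm_digamma_natCast_add_one_le (n : ℕ) :
    ‖_root_.digamma ((n : ℂ) + 1)‖ ≤ ‖_root_.digamma 1‖ + n := by
  induction n with
  | zero => simp
  | succ n ih =>
    have hinv : ‖((n : ℂ) + 1)⁻¹‖ ≤ 1 := by
      rw [norm_inv, ← Nat.cast_add_one, Complex.norm_natCast]
      exact inv_le_one_of_one_le₀ (by simp)
    calc ‖_root_.digamma ((n + 1 : ℕ) + 1)‖
        = ‖_root_.digamma ((n : ℂ) + 1) + ((n : ℂ) + 1)⁻¹‖ := by
          rw [Nat.cast_add_one, digamma_natCast_add_one_add_one]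
      _ ≤ ‖_root_.digamma 1‖ + n + 1 := (norm_add_le _ _).trans (add_le_add ih hinv)
      _ = ‖_root_.digamma 1‖ + (n + 1 : ℕ) := by push_cast; ring

noncomputable def powSeries (a : ℕ → ℂ) (z : ℂ) : ℂ := ∑' n, a n * z ^ n

def derivCoeff (a : ℕ → ℂ) (n : ℕ) : ℂ := (n + 1 : ℕ) * a (n + 1)

def FactorialGrowth (a : ℕ → ℂ) : Prop :=
  ∃ C r : ℝ, 0 ≤ r ∧ ∀ n, ‖a n‖ ≤ C * r ^ n / n.factorial

theorem hasSum_powSeries_of_shift {a : ℕ → ℂ} {z : ℂ} (h : Summable fun n => a (n + 1) * z ^ n) :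
    HasSum (fun n => a n * z ^ n) (a 0 + z * powSeries (fun n => a (n + 1)) z) := by
  have hshift :
      HasSum (fun n => a (n + 1) * z ^ (n + 1)) (z * powSeries (fun n => a (n + 1)) z) := by
    have e : (fun n => a (n + 1) * z ^ (n + 1)) = fun n => z * (a (n + 1) * z ^ n) :=
      funext fun n => by ring
    rw [e]
    exact h.hasSum.mul_left z
  simpa [add_comm] using (hasSum_nat_add_iff (f := fun n => a n * z ^ n) 1).mp hshift

namespace FactorialGrowth

variable {a : ℕ → ℂ}

theorem mono (ha : FactorialGrowth a) {b : ℕ → ℂ} (hb : ∀ n, ‖b n‖ ≤ ‖a n‖) :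
    FactorialGrowth b := by
  obtain ⟨C, r, hr, h⟩ := ha
  exact ⟨C, r, hr, fun n => (hb n).trans (h n)⟩

theorem derivCoeff (ha : FactorialGrowth a) : FactorialGrowth (derivCoeff a) := by
  obtain ⟨C, r, hr, h⟩ := ha
  refine ⟨C * r, r, hr, fun n => ?_⟩
  calc ‖_root_.derivCoeff a n‖ = (n + 1) * ‖a (n + 1)‖ := by
        rw [_root_.derivCoeff, norm_mul, Complex.norm_natCast, Nat.cast_add_one]
    _ ≤ (n + 1) * (C * r ^ (n + 1) / (n + 1).factorial) := by gcongr; exact h _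
    _ = C * r * r ^ n / n.factorial := by
        rw [Nat.factorial_succ, Nat.cast_mul, pow_succ]
        field_simp
        push_cast
        ring

theorem shift (ha : FactorialGrowth a) : FactorialGrowth fun n => a (n + 1) :=
  ha.derivCoeff.mono fun n => by
    rw [_root_.derivCoeff, norm_mul, Complex.norm_natCast]
    exact le_mul_of_one_le_left (norm_nonneg _) (by simp)

theorem summable_norm_mul_pow (ha : FactorialGrowth a) {R : ℝ} (hR : 0 ≤ R) :
    Summable fun n => ‖a n‖ * R ^ n := by
  obtain ⟨C, r, hr, h⟩ := ha
  refine Summable.of_nonneg_of_le (fun n => by positivity) (fun n => ?_)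
    ((Real.summable_pow_div_factorial (r * R)).mul_left C)
  calc ‖a n‖ * R ^ n ≤ C * r ^ n / n.factorial * R ^ n := by gcongr; exact h n
    _ = C * ((r * R) ^ n / n.factorial) := by ring

theorem summable (ha : FactorialGrowth a) (z : ℂ) : Summable fun n => a n * z ^ n :=
  .of_norm <| by simpa [norm_mul, norm_pow] using ha.summable_norm_mul_pow (norm_nonneg z)

theorem hasDerivAt_powSeries (ha : FactorialGrowth a) (z : ℂ) :
    HasDerivAt (powSeries a) (powSeries (_root_.derivCoeff a) z) z := by
  set R := ‖z‖ + 1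
  have hzR : z ∈ Metric.ball (0 : ℂ) R := by simp [R]
  have hu : Summable fun n => ‖a n‖ * (n * R ^ (n - 1)) := by
    refine (summable_nat_add_iff 1).mp <|
      (ha.derivCoeff.summable_norm_mul_pow (by positivity : (0 : ℝ) ≤ R)).congr fun n => ?_
    rw [_root_.derivCoeff, norm_mul, Complex.norm_natCast, Nat.add_sub_cancel]
    ring
  have hbound : ∀ n, ∀ y ∈ Metric.ball (0 : ℂ) R,
      ‖a n * (n * y ^ (n - 1))‖ ≤ ‖a n‖ * (n * R ^ (n - 1)) := by
    intro n y hy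
    rw [mem_ball_zero_iff] at hy
    rw [norm_mul, norm_mul, norm_pow, Complex.norm_natCast]
    gcongr
  have hderiv := hasDerivAt_tsum_of_isPreconnected hu Metric.isOpen_ball
    (convex_ball (0 : ℂ) R).isPreconnected (fun n y _ => (hasDerivAt_pow n y).const_mul (a n))
    hbound hzR (ha.summable z) hzR
  refine hderiv.congr_deriv ?_
  rw [tsum_eq_zero_add' (f := fun n => a n * (n * z ^ (n - 1)))]
  · simp only [Nat.cast_zero, zero_mul, mul_zero, zero_add, Nat.add_sub_cancel]
    exact tsum_congr fun n => by rw [_root_.derivCoeff]; ring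
  · exact (ha.derivCoeff.summable z).congr fun n => by
      rw [_root_.derivCoeff, Nat.add_sub_cancel]; ring

theorem deriv_powSeries (ha : FactorialGrowth a) :
    deriv (powSeries a) = powSeries (_root_.derivCoeff a) :=
  funext fun z => (ha.hasDerivAt_powSeries z).deriv

theorem analyticAt_powSeries (ha : FactorialGrowth a) (z : ℂ) : AnalyticAt ℂ (powSeries a) z :=
  Differentiable.analyticAt (fun w => (ha.hasDerivAt_powSeries w).differentiableAt) z

end FactorialGrowth

noncomputable def besselOp (m : ℕ) (f : ℂ → ℂ) (z : ℂ) : ℂ :=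
  z * deriv (deriv f) z + (m + 1) * deriv f z - f z

section besselOp

variable (m : ℕ) {z : ℂ}

theorem besselOp_sub {f g : ℂ → ℂ} (hf : AnalyticAt ℂ f z) (hg : AnalyticAt ℂ g z) :
    besselOp m (f - g) z = besselOp m f z - besselOp m g z := by
  have h : deriv (f - g) =ᶠ[𝓝 z] deriv f - deriv g := by
    filter_upwards [hf.eventually_analyticAt, hg.eventually_analyticAt] with w hfw hgw
    exact deriv_sub hfw.differentiableAt hgw.differentiableAt
  simp only [besselOp, h.deriv_eq, h.eq_of_nhds, Pi.sub_apply,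
    deriv_sub hf.deriv.differentiableAt hg.deriv.differentiableAt]
  ring

theorem besselOp_sum {ι : Type*} (s : Finset ι) (f : ι → ℂ → ℂ)
    (hf : ∀ i ∈ s, AnalyticAt ℂ (f i) z) :
    besselOp m (fun w => ∑ i ∈ s, f i w) z = ∑ i ∈ s, besselOp m (f i) z := by
  have h : deriv (fun w => ∑ i ∈ s, f i w) =ᶠ[𝓝 z] fun w => ∑ i ∈ s, deriv (f i) w := by
    filter_upwards [(eventually_all_finset s).2 fun i hi => (hf i hi).eventually_analyticAt]
      with w hw
    exact deriv_fun_sum fun i hi => (hw i hi).differentiableAt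
  simp only [besselOp, h.deriv_eq, h.eq_of_nhds,
    deriv_fun_sum fun i hi => (hf i hi).deriv.differentiableAt, Finset.mul_sum,
    ← Finset.sum_add_distrib, ← Finset.sum_sub_distrib]

theorem besselOp_const_mul_zpow (c : ℂ) (k : ℕ) (hz : z ≠ 0) :
    besselOp m (fun w => c * w ^ (-(k : ℤ))) z
      = c * (k * (k - m)) * z ^ (-(k : ℤ) - 1) - c * z ^ (-(k : ℤ)) := by
  have h1 : deriv (fun w => c * w ^ (-(k : ℤ)))
      = fun w => c * (((-(k : ℤ) : ℤ) : ℂ) * w ^ (-(k : ℤ) - 1)) := by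
    rw [deriv_const_mul_field', deriv_zpow']
  have h2 : deriv (fun w => c * (((-(k : ℤ) : ℤ) : ℂ) * w ^ (-(k : ℤ) - 1)))
      = fun w =>
        c * ((-(k : ℤ) : ℤ) : ℂ) * (((-(k : ℤ) - 1 : ℤ) : ℂ) * w ^ (-(k : ℤ) - 1 - 1)) := by
    simp only [← mul_assoc, deriv_const_mul_field', deriv_zpow']
  simp only [besselOp, h1, h2]
  rw [zpow_sub_one₀ hz (-(k : ℤ) - 1), zpow_sub_one₀ hz (-(k : ℤ))]
  push_cast
  field_simp
  ring

end besselOp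

noncomputable def polarCoeff (m k : ℕ) : ℂ :=
  (-1 : ℂ) ^ (k - 1) * (k - 1).factorial / (m - k).factorial

theorem polarCoeff_succ {m k : ℕ} (hk : 1 ≤ k) (hkm : k < m) :
    polarCoeff m (k + 1) = polarCoeff m k * (k * (k - m)) := by
  obtain ⟨j, rfl⟩ : ∃ j, k = j + 1 := ⟨k - 1, by omega⟩
  obtain ⟨r, rfl⟩ : ∃ r, m = j + 2 + r := ⟨m - (j + 2), by omega⟩
  have e1 : j + 2 + r - (j + 1) = r + 1 := by omega
  have e2 : j + 2 + r - (j + 1 + 1) = r := by omega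
  simp only [polarCoeff, Nat.add_sub_cancel, e1, e2, Nat.factorial_succ, pow_succ]
  push_cast
  field_simp
  ring

theorem besselOp_polarPart (m : ℕ) {z : ℂ} (hz : z ≠ 0) :
    besselOp m (fun w => ∑ k ∈ Finset.Icc 1 m, polarCoeff m k * w ^ (-(k : ℤ))) z
      = -(m / m.factorial) * z⁻¹ := by
  rw [besselOp_sum m _ (fun k w => polarCoeff m k * w ^ (-(k : ℤ)))
    fun k _ => analyticAt_const.mul (analyticAt_id.zpow hz)]
  simp only [besselOp_const_mul_zpow m _ _ hz]
  rcases m with _ | M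
  · simp
  simp only [Finset.sum_sub_distrib, ← Finset.Ico_add_one_right_eq_Icc,
    Finset.sum_Ico_eq_sum_range, Nat.add_sub_cancel, add_comm 1]
  rw [Finset.sum_range_succ, Finset.sum_range_succ']
  have hshift : ∀ k ∈ Finset.range M,
      polarCoeff (M + 1) (k + 1) * (((k + 1 : ℕ) : ℂ) * (((k + 1 : ℕ) : ℂ) - ((M + 1 : ℕ) : ℂ)))
        * z ^ (-((k + 1 : ℕ) : ℤ) - 1)
      = polarCoeff (M + 1) (k + 1 + 1) * z ^ (-((k + 1 + 1 : ℕ) : ℤ)) := by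
    intro k hk
    rw [polarCoeff_succ (k := k + 1) (by omega) (by simp at hk; omega)]
    push_cast
    ring_nf
  rw [Finset.sum_congr rfl hshift]
  simp [polarCoeff, Nat.factorial_succ, div_mul_cancel_left₀ (Nat.cast_add_one_ne_zero (R := ℂ) M)]

theorem FactorialGrowth.besselOp_powSeries {a : ℕ → ℂ} (ha : FactorialGrowth a) (m : ℕ) (z : ℂ) :
    besselOp m (powSeries a) z
      = powSeries (fun n => (n + 1) * (n + m + 1) * a (n + 1) - a n) z := by
  have hz : HasSum (fun n => n * _root_.derivCoeff a n * z ^ n)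
      (z * powSeries (_root_.derivCoeff (_root_.derivCoeff a)) z) := by
    have h := hasSum_powSeries_of_shift (a := fun n => n * _root_.derivCoeff a n)
      (ha.derivCoeff.derivCoeff.summable z)
    rwa [Nat.cast_zero, zero_mul, zero_add] at h
  have hsum := (hz.add ((ha.derivCoeff.summable z).hasSum.mul_left ((m : ℂ) + 1))).sub
    (ha.summable z).hasSum
  rw [besselOp, ha.deriv_powSeries, ha.derivCoeff.deriv_powSeries]
  exact hsum.tsum_eq.symm.trans <| tsum_congr fun n => by
    simp only [_root_.derivCoeff]; push_cast; ring

noncomputable def besselCoeff (m n : ℕ) : ℂ := ((m + n).factorial * n.factorial : ℂ)⁻¹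

noncomputable def digammaCoeff (m n : ℕ) : ℂ :=
  (_root_.digamma (n + 1) + _root_.digamma (n + m + 1)) / (n.factorial * (m + n).factorial)

theorem Fm_eq_powSeries (m : ℕ) : Fm m = powSeries (besselCoeff m) :=
  funext fun _ => tsum_congr fun _ => div_eq_inv_mul _ _

theorem Dm_eq_sub (m : ℕ) :
    Dm m = (fun z => ∑ k ∈ Finset.Icc 1 m, polarCoeff m k * z ^ (-(k : ℤ)))
      - powSeries (digammaCoeff m) :=
  rfl

theorem besselCoeff_eq_mul_succ (m n : ℕ) :
    besselCoeff m n = (n + 1) * (n + m + 1) * besselCoeff m (n + 1) := by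
  have h1 : ((m + n).factorial : ℂ) ≠ 0 := Nat.cast_ne_zero.mpr (Nat.factorial_ne_zero _)
  have h2 : (n.factorial : ℂ) ≠ 0 := Nat.cast_ne_zero.mpr (Nat.factorial_ne_zero _)
  have h3 : (n : ℂ) + 1 ≠ 0 := Nat.cast_add_one_ne_zero n
  have h4 : (m : ℂ) + n + 1 ≠ 0 := by exact_mod_cast Nat.succ_ne_zero (m + n)
  simp only [besselCoeff, ← add_assoc, Nat.factorial_succ]
  push_cast
  field_simp
  ring

theorem norm_besselCoeff_le (m n : ℕ) : ‖besselCoeff m n‖ ≤ (n.factorial : ℝ)⁻¹ := by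
  rw [besselCoeff, norm_inv, norm_mul, Complex.norm_natCast, Complex.norm_natCast]
  exact inv_anti₀ (by positivity)
    (le_mul_of_one_le_left (by positivity) (Nat.one_le_cast.mpr (Nat.factorial_pos _)))

theorem factorialGrowth_besselCoeff (m : ℕ) : FactorialGrowth (besselCoeff m) :=
  ⟨1, 1, zero_le_one, fun n => by simpa [div_eq_mul_inv] using norm_besselCoeff_le m n⟩

theorem digammaCoeff_eq_mul (m n : ℕ) :
    digammaCoeff m n = (_root_.digamma (n + 1) + _root_.digamma (n + m + 1)) * besselCoeff m n := by
  rw [digammaCoeff, besselCoeff, div_eq_mul_inv, mul_comm (n.factorial : ℂ)]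

theorem factorialGrowth_digammaCoeff (m : ℕ) : FactorialGrowth (digammaCoeff m) := by
  set C := ‖_root_.digamma 1‖
  refine ⟨2 * C + m + 2, 2, zero_le_two, fun n => ?_⟩
  have h1 := norm_digamma_natCast_add_one_le n
  have h2 := norm_digamma_natCast_add_one_le (n + m)
  push_cast at h2
  have hn : (n : ℝ) + 1 ≤ 2 ^ n := by exact_mod_cast Nat.lt_two_pow_self
  have hC : 0 ≤ C := norm_nonneg _
  rw [digammaCoeff_eq_mul, norm_mul, div_eq_mul_inv]
  calc _ ≤ (‖_root_.digamma (n + 1)‖ + ‖_root_.digamma (n + m + 1)‖) * (n.factorial : ℝ)⁻¹ :=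
        mul_le_mul (norm_add_le _ _) (norm_besselCoeff_le m n) (norm_nonneg _) (by positivity)
    _ ≤ (2 * C + m + 2) * 2 ^ n * (n.factorial : ℝ)⁻¹ := by
        gcongr
        nlinarith

theorem digammaCoeff_recurrence (m n : ℕ) :
    (n + 1) * (n + m + 1) * digammaCoeff m (n + 1) - digammaCoeff m n
      = (m + 2 * (n + 1)) * besselCoeff m (n + 1) := by
  have h1 := digamma_natCast_add_one_add_one n
  have h2 := digamma_natCast_add_one_add_one (n + m)
  push_cast at h1 h2
  rw [digammaCoeff_eq_mul, digammaCoeff_eq_mul, besselCoeff_eq_mul_succ m n]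
  push_cast
  rw [show (n : ℂ) + 1 + m + 1 = n + m + 1 + 1 by ring, h1, h2]
  have : (n : ℂ) + 1 ≠ 0 := Nat.cast_add_one_ne_zero n
  have : (n : ℂ) + m + 1 ≠ 0 := by exact_mod_cast Nat.succ_ne_zero (n + m)
  field_simp
  ring

theorem neg_div_mul_Fm_sub_two_mul_deriv_Fm (m : ℕ) {z : ℂ} (hz : z ≠ 0) :
    -((m : ℂ) / z) * Fm m z - 2 * deriv (Fm m) z
      = -((m : ℂ) / m.factorial) * z⁻¹
        - powSeries (fun n => (m + 2 * (n + 1)) * besselCoeff m (n + 1)) z := by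
  have hb := factorialGrowth_besselCoeff m
  have hF : powSeries (besselCoeff m) z
      = (m.factorial : ℂ)⁻¹ + z * powSeries (fun n => besselCoeff m (n + 1)) z := by
    have h0 : besselCoeff m 0 = (m.factorial : ℂ)⁻¹ := by simp [besselCoeff]
    rw [← h0]
    exact (hasSum_powSeries_of_shift (hb.shift.summable z)).tsum_eq
  have hS : powSeries (fun n => (m + 2 * (n + 1)) * besselCoeff m (n + 1)) z
      = m * powSeries (fun n => besselCoeff m (n + 1)) z
        + 2 * powSeries (derivCoeff (besselCoeff m)) z :=
    (tsum_congr fun n => by simp only [derivCoeff]; push_cast; ring).trans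
      (((hb.shift.summable z).hasSum.mul_left (m : ℂ)).add
        ((hb.derivCoeff.summable z).hasSum.mul_left 2)).tsum_eq
  rw [Fm_eq_powSeries, hb.deriv_powSeries, hF, hS]
  field_simp
  ring

theorem Dm_inhomogeneous (m : ℕ) (z : ℂ) (hz : z ≠ 0) :
    z * deriv (deriv (Dm m)) z + (m + 1) * deriv (Dm m) z - Dm m z
      = -((m : ℂ) / z) * Fm m z - 2 * deriv (Fm m) z := by
  have hc := factorialGrowth_digammaCoeff m
  have hpolar : AnalyticAt ℂ (fun w => ∑ k ∈ Finset.Icc 1 m, polarCoeff m k * w ^ (-(k : ℤ))) z :=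
    Finset.analyticAt_fun_sum _ fun k _ => analyticAt_const.mul (analyticAt_id.zpow hz)
  calc z * deriv (deriv (Dm m)) z + (m + 1) * deriv (Dm m) z - Dm m z
      = besselOp m (Dm m) z := rfl
    _ = -(m / m.factorial) * z⁻¹
        - powSeries (fun n => (m + 2 * (n + 1)) * besselCoeff m (n + 1)) z := by
      rw [Dm_eq_sub, besselOp_sub m hpolar (hc.analyticAt_powSeries z), besselOp_polarPart m hz,
        hc.besselOp_powSeries]
      simp only [digammaCoeff_recurrence]
    _ = -((m : ℂ) / z) * Fm m z - 2 * deriv (Fm m) z :=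
      (neg_div_mul_Fm_sub_two_mul_deriv_Fm m hz).symm
end

section
/- For integers m ≥ 0 and z in ℂ ∖ (−∞, 0], the function log(z)·𝐅_m(z) + 𝐃_m(z) is annihilated by the 0F1 operator: z·∂_z²(log z·𝐅_m + 𝐃_m)(z) + (m+1)·∂_z(log z·𝐅_m + 𝐃_m)(z) − (log z·𝐅_m + 𝐃_m)(z) = 0. -/
/-!
The operator `L = z ∂² + (m+1) ∂ − 1` kills `𝐅_m` because its coefficients satisfy
`aₙ = (n+1)(n+m+1) aₙ₊₁`. By Leibniz, `L(log · 𝐅_m) = log · L𝐅_m + 2𝐅_m' + m𝐅_m/z`.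
The shift `ψ(s+1) = ψ(s) + 1/s` turns `L` of the digamma series of `𝐃_m` into
`2𝐅_m' + m(𝐅_m − a₀)/z`, while on the Laurent polynomial part of `𝐃_m` the operator
telescopes to `−m a₀/z`, where `a₀ = 1/m!`. Everything cancels.
-/

open Complex

open Filter Topology Finset
open scoped Nat

namespace ZeroFOne

noncomputable def zeroFOneOp (μ : ℂ) (f : ℂ → ℂ) (z : ℂ) : ℂ :=
  z * deriv (deriv f) z + μ * deriv f z - f z

section Operator

variable {μ z : ℂ} {f g : ℂ → ℂ}

theorem zeroFOneOp_add (hf : AnalyticAt ℂ f z) (hg : AnalyticAt ℂ g z) :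
    zeroFOneOp μ (fun w => f w + g w) z = zeroFOneOp μ f z + zeroFOneOp μ g z := by
  have hderiv : deriv (fun w => f w + g w) =ᶠ[𝓝 z] fun w => deriv f w + deriv g w := by
    filter_upwards [hf.eventually_analyticAt, hg.eventually_analyticAt] with w hfw hgw
    exact deriv_fun_add hfw.differentiableAt hgw.differentiableAt
  rw [zeroFOneOp, zeroFOneOp, zeroFOneOp, hderiv.deriv_eq, hderiv.eq_of_nhds,
    deriv_fun_add hf.deriv.differentiableAt hg.deriv.differentiableAt]
  ring

theorem zeroFOneOp_sub (hf : AnalyticAt ℂ f z) (hg : AnalyticAt ℂ g z) :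
    zeroFOneOp μ (fun w => f w - g w) z = zeroFOneOp μ f z - zeroFOneOp μ g z := by
  have hderiv : deriv (fun w => f w - g w) =ᶠ[𝓝 z] fun w => deriv f w - deriv g w := by
    filter_upwards [hf.eventually_analyticAt, hg.eventually_analyticAt] with w hfw hgw
    exact deriv_fun_sub hfw.differentiableAt hgw.differentiableAt
  rw [zeroFOneOp, zeroFOneOp, zeroFOneOp, hderiv.deriv_eq, hderiv.eq_of_nhds,
    deriv_fun_sub hf.deriv.differentiableAt hg.deriv.differentiableAt]
  ring

theorem zeroFOneOp_log_mul (hz : z ∈ slitPlane) (hf : AnalyticAt ℂ f z) :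
    zeroFOneOp μ (fun w => log w * f w) z
      = log z * zeroFOneOp μ f z + 2 * deriv f z + (μ - 1) * f z / z := by
  have hderiv : deriv (fun w => log w * f w) =ᶠ[𝓝 z] fun w => w⁻¹ * f w + log w * deriv f w := by
    filter_upwards [isOpen_slitPlane.mem_nhds hz, hf.eventually_analyticAt] with w hw hfw
    exact ((hasDerivAt_log hw).mul hfw.differentiableAt.hasDerivAt).deriv
  have h2 : HasDerivAt (fun w => w⁻¹ * f w + log w * deriv f w)
      (-(z ^ 2)⁻¹ * f z + z⁻¹ * deriv f z + (z⁻¹ * deriv f z + log z * deriv (deriv f) z)) z :=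
    ((hasDerivAt_inv (slitPlane_ne_zero hz)).fun_mul hf.differentiableAt.hasDerivAt).fun_add
      ((hasDerivAt_log hz).fun_mul hf.deriv.differentiableAt.hasDerivAt)
  rw [zeroFOneOp, zeroFOneOp, hderiv.deriv_eq, h2.deriv, hderiv.eq_of_nhds]
  field_simp [slitPlane_ne_zero hz]
  ring

end Operator

noncomputable def coeffSeries (c : ℕ → ℂ) (z : ℂ) : ℂ := ∑' n, c n * z ^ n

def derivCoeff (c : ℕ → ℂ) (n : ℕ) : ℂ := (n + 1) * c (n + 1)

/- The bound `‖c n‖ ≤ A * C ^ n / n !` used below survives `derivCoeff` (with `A * C` for `A`),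
so the series and its termwise derivatives all converge on `ℂ`. -/
section CoeffSeries

variable {c : ℕ → ℂ} {A C : ℝ}

theorem norm_derivCoeff_le (hc : ∀ n, ‖c n‖ ≤ A * C ^ n / n !) (n : ℕ) :
    ‖derivCoeff c n‖ ≤ A * C * C ^ n / n ! := by
  have h := hc (n + 1)
  rw [Nat.factorial_succ, Nat.cast_mul, pow_succ] at h
  rw [derivCoeff, norm_mul, show (n : ℂ) + 1 = ((n + 1 : ℕ) : ℂ) by push_cast; ring, norm_natCast]
  calc ((n + 1 : ℕ) : ℝ) * ‖c (n + 1)‖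
      ≤ (n + 1 : ℕ) * (A * (C ^ n * C) / ((n + 1 : ℕ) * n !)) := by gcongr
    _ = A * C * C ^ n / n ! := by field_simp

theorem summable_coeff_mul_pow (hc : ∀ n, ‖c n‖ ≤ A * C ^ n / n !) (z : ℂ) :
    Summable fun n => c n * z ^ n :=
  .of_norm_bounded ((Real.summable_pow_div_factorial (C * ‖z‖)).mul_left A) fun n => by
    calc ‖c n * z ^ n‖ = ‖c n‖ * ‖z‖ ^ n := by rw [norm_mul, norm_pow]
      _ ≤ A * C ^ n / n ! * ‖z‖ ^ n := by gcongr; exact hc n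
      _ = A * ((C * ‖z‖) ^ n / n !) := by ring

theorem hasDerivAt_coeffSeries (hc : ∀ n, ‖c n‖ ≤ A * C ^ n / n !) (z : ℂ) :
    HasDerivAt (coeffSeries c) (coeffSeries (derivCoeff c) z) z := by
  obtain ⟨R, hzR, hR⟩ : ∃ R : ℝ, z ∈ Metric.ball 0 R ∧ 1 ≤ R := ⟨‖z‖ + 1, by simp, by simp⟩
  have hbound (n : ℕ) (y : ℂ) (hy : y ∈ Metric.ball 0 R) :
      ‖c n * (n * y ^ (n - 1))‖ ≤ A * (C * (2 * R)) ^ n / n ! := by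
    have hyR : ‖y‖ ≤ R := (mem_ball_zero_iff.1 hy).le
    have hpow : (n : ℝ) * ‖y‖ ^ (n - 1) ≤ (2 * R) ^ n := by
      rw [mul_pow]
      gcongr
      · exact_mod_cast Nat.lt_two_pow_self.le
      · calc ‖y‖ ^ (n - 1) ≤ R ^ (n - 1) := by gcongr
          _ ≤ R ^ n := pow_le_pow_right₀ hR (n.sub_le 1)
    calc ‖c n * (n * y ^ (n - 1))‖ = ‖c n‖ * (n * ‖y‖ ^ (n - 1)) := by simp
      _ ≤ A * C ^ n / n ! * (2 * R) ^ n :=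
        mul_le_mul (hc n) hpow (by positivity) ((norm_nonneg _).trans (hc n))
      _ = A * (C * (2 * R)) ^ n / n ! := by ring
  have hu := (Real.summable_pow_div_factorial (C * (2 * R))).mul_left A
  have hderiv := hasDerivAt_tsum_of_isPreconnected (hu.congr fun n => by ring) Metric.isOpen_ball
    (convex_ball 0 R).isPreconnected (fun n y _ => (hasDerivAt_pow n y).const_mul (c n))
    hbound hzR (summable_coeff_mul_pow hc z) hzR
  refine hderiv.congr_deriv ?_
  rw [(Summable.of_norm_bounded (hu.congr fun n => by ring) (hbound · z hzR)).tsum_eq_zero_add]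
  simp only [coeffSeries, derivCoeff, CharP.cast_eq_zero, zero_mul, mul_zero, zero_add]
  exact tsum_congr fun n => by push_cast; ring

theorem deriv_coeffSeries (hc : ∀ n, ‖c n‖ ≤ A * C ^ n / n !) :
    deriv (coeffSeries c) = coeffSeries (derivCoeff c) :=
  funext fun z => (hasDerivAt_coeffSeries hc z).deriv

theorem analyticAt_coeffSeries (hc : ∀ n, ‖c n‖ ≤ A * C ^ n / n !) (z : ℂ) :
    AnalyticAt ℂ (coeffSeries c) z :=
  Differentiable.analyticAt (fun w => (hasDerivAt_coeffSeries hc w).differentiableAt) z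

theorem hasSum_natCast_mul_coeff_mul_pow (hc : ∀ n, ‖c n‖ ≤ A * C ^ n / n !) (z : ℂ) :
    HasSum (fun n => n * c n * z ^ n) (z * coeffSeries (derivCoeff c) z) := by
  have h := (summable_coeff_mul_pow (norm_derivCoeff_le hc) z).hasSum.mul_left z
  refine (hasSum_nat_add_iff' 1).1 ?_
  simp only [sum_range_one, CharP.cast_eq_zero, zero_mul, sub_zero]
  exact h.congr_fun fun n => by simp only [derivCoeff]; push_cast; ring

theorem zeroFOneOp_coeffSeries (hc : ∀ n, ‖c n‖ ≤ A * C ^ n / n !) (μ z : ℂ) :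
    zeroFOneOp μ (coeffSeries c) z
      = coeffSeries (fun n => (n + μ) * derivCoeff c n - c n) z := by
  have hc' := norm_derivCoeff_le hc
  have h := ((hasSum_natCast_mul_coeff_mul_pow hc' z).add
    ((summable_coeff_mul_pow hc' z).hasSum.mul_left μ)).sub (summable_coeff_mul_pow hc z).hasSum
  rw [zeroFOneOp, deriv_coeffSeries hc, deriv_coeffSeries hc']
  unfold coeffSeries at h ⊢
  rw [← h.tsum_eq]
  exact tsum_congr fun n => by ring

end CoeffSeries

theorem hasDerivAt_sum_mul_zpow {ι : Type*} (s : Finset ι) (a : ι → ℂ) (e : ι → ℤ) {z : ℂ}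
    (hz : z ≠ 0) :
    HasDerivAt (fun w => ∑ i ∈ s, a i * w ^ e i) (∑ i ∈ s, a i * e i * z ^ (e i - 1)) z :=
  HasDerivAt.fun_sum fun i _ => by
    simpa only [mul_assoc] using (hasDerivAt_zpow (e i) z (.inl hz)).const_mul (a i)

theorem mul_zeroFOneOp_term_zpow {z : ℂ} (hz : z ≠ 0) (a μ : ℂ) (e : ℤ) :
    z * (z * (a * e * (e - 1 : ℤ) * z ^ (e - 1 - 1)) + μ * (a * e * z ^ (e - 1)) - a * z ^ e)
      = a * e * (e - 1 + μ) * z ^ e - a * z ^ (e + 1) := by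
  have h1 : z ^ (e - 1) = z ^ (e - 1 - 1) * z := by rw [← zpow_add_one₀ hz, sub_add_cancel]
  have h2 : z ^ e = z ^ (e - 1) * z := by rw [← zpow_add_one₀ hz, sub_add_cancel]
  rw [zpow_add_one₀ hz, h2, h1]
  push_cast
  ring

theorem digamma_natCast_add_one_add_one (n : ℕ) :
    Complex.digamma ((n : ℂ) + 1 + 1) = Complex.digamma (n + 1) + ((n : ℂ) + 1)⁻¹ := by
  refine Complex.digamma_apply_add_one _ fun k h => ?_
  have : ((n + k + 1 : ℕ) : ℂ) = 0 := by push_cast; linear_combination h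
  exact Nat.succ_ne_zero _ (Nat.cast_eq_zero.1 this)

theorem norm_digamma_natCast_add_one_le (n : ℕ) :
    ‖Complex.digamma ((n : ℂ) + 1)‖ ≤ ‖Complex.digamma 1‖ + n := by
  induction n with
  | zero => simp
  | succ n ih =>
    have hinv : ‖((n : ℂ) + 1)⁻¹‖ ≤ 1 := by
      rw [norm_inv, show (n : ℂ) + 1 = ((n + 1 : ℕ) : ℂ) by push_cast; ring, norm_natCast]
      exact inv_le_one_of_one_le₀ (by simp)
    calc ‖Complex.digamma ((n + 1 : ℕ) + 1)‖
        = ‖Complex.digamma ((n : ℂ) + 1) + ((n : ℂ) + 1)⁻¹‖ := by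
          rw [← digamma_natCast_add_one_add_one]; push_cast; rfl
      _ ≤ ‖Complex.digamma 1‖ + n + 1 := (norm_add_le _ _).trans (add_le_add ih hinv)
      _ = ‖Complex.digamma 1‖ + (n + 1 : ℕ) := by push_cast; ring

section Coefficients

variable (m : ℕ)

noncomputable def fmCoeff (n : ℕ) : ℂ := (((m + n)! : ℂ) * n !)⁻¹

noncomputable def dmCoeff (n : ℕ) : ℂ :=
  (Complex.digamma (n + 1) + Complex.digamma (n + m + 1)) * fmCoeff m n

-- `dmLaurentCoeff m j` is the coefficient of `z^{-(j+1)}` in `𝐃_m`.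
noncomputable def dmLaurentCoeff (j : ℕ) : ℂ := (-1) ^ j * j ! / (m - 1 - j)!

noncomputable def dmLaurent (z : ℂ) : ℂ :=
  ∑ j ∈ range m, dmLaurentCoeff m j * z ^ (-(j + 1 : ℤ))

theorem Fm_eq_coeffSeries : Fm m = coeffSeries (fmCoeff m) :=
  funext fun z => tsum_congr fun n => by rw [fmCoeff, div_eq_inv_mul]

theorem Dm_eq_dmLaurent_sub_coeffSeries (z : ℂ) :
    Dm m z = dmLaurent m z - coeffSeries (dmCoeff m) z := by
  rw [Dm, dmLaurent, ← Finset.Ico_add_one_right_eq_Icc, sum_Ico_eq_sum_range, Nat.add_sub_cancel]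
  congr 1
  · refine sum_congr rfl fun j _ => ?_
    rw [dmLaurentCoeff, Nat.add_sub_cancel_left, Nat.sub_sub, add_comm 1 j]
    push_cast
    ring
  · refine tsum_congr fun n => ?_
    rw [dmCoeff, fmCoeff, mul_comm ((n ! : ℂ)), div_eq_mul_inv]
    rfl

theorem fmCoeff_eq_mul_fmCoeff_succ (n : ℕ) :
    fmCoeff m n = (n + 1) * (n + m + 1) * fmCoeff m (n + 1) := by
  rw [fmCoeff, fmCoeff, ← add_assoc, Nat.factorial_succ, Nat.factorial_succ]
  have h1 : (n : ℂ) + 1 ≠ 0 := by exact_mod_cast n.succ_ne_zero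
  have h2 : (m : ℂ) + n + 1 ≠ 0 := by exact_mod_cast (m + n).succ_ne_zero
  have h3 : ((m + n)! : ℂ) ≠ 0 := by exact_mod_cast (m + n).factorial_ne_zero
  have h4 : (n ! : ℂ) ≠ 0 := by exact_mod_cast n.factorial_ne_zero
  push_cast
  field_simp
  ring

theorem norm_fmCoeff_le (n : ℕ) : ‖fmCoeff m n‖ ≤ 1 * 1 ^ n / n ! := by
  rw [fmCoeff, norm_inv, norm_mul, norm_natCast, norm_natCast, one_pow, one_mul, one_div]
  exact inv_anti₀ (by positivity)
    (le_mul_of_one_le_left (by positivity) (by exact_mod_cast (m + n).factorial_pos))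

theorem norm_dmCoeff_le (n : ℕ) :
    ‖dmCoeff m n‖ ≤ (2 * ‖Complex.digamma 1‖ + m + 2) * 2 ^ n / n ! := by
  have hψ₁ := norm_digamma_natCast_add_one_le n
  have hψ₂ := norm_digamma_natCast_add_one_le (n + m)
  push_cast at hψ₂
  have hn : (n : ℝ) + 1 ≤ 2 ^ n := by exact_mod_cast Nat.lt_two_pow_self
  have h1 : (1 : ℝ) ≤ 2 ^ n := one_le_pow₀ one_le_two
  have hsum : ‖Complex.digamma (n + 1) + Complex.digamma (n + m + 1)‖
      ≤ (2 * ‖Complex.digamma 1‖ + m + 2) * 2 ^ n :=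
    calc _ ≤ ‖Complex.digamma (n + 1)‖ + ‖Complex.digamma (n + m + 1)‖ := norm_add_le _ _
      _ ≤ (‖Complex.digamma 1‖ + n) + (‖Complex.digamma 1‖ + (n + m)) := add_le_add hψ₁ hψ₂
      _ ≤ _ := by nlinarith [norm_nonneg (Complex.digamma 1), (m.cast_nonneg : (0 : ℝ) ≤ m)]
  calc ‖dmCoeff m n‖ = ‖Complex.digamma (n + 1) + Complex.digamma (n + m + 1)‖ * ‖fmCoeff m n‖ := by
        rw [dmCoeff, norm_mul]
    _ ≤ (2 * ‖Complex.digamma 1‖ + m + 2) * 2 ^ n * (1 * 1 ^ n / n !) :=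
        mul_le_mul hsum (norm_fmCoeff_le m n) (norm_nonneg _) (by positivity)
    _ = _ := by ring

theorem zeroFOneOp_coeffSeries_fmCoeff (z : ℂ) :
    zeroFOneOp (m + 1) (coeffSeries (fmCoeff m)) z = 0 := by
  have hcoeff :
      (fun n : ℕ => (n + ((m : ℂ) + 1)) * derivCoeff (fmCoeff m) n - fmCoeff m n) = fun _ => 0 := by
    funext n
    rw [derivCoeff, fmCoeff_eq_mul_fmCoeff_succ m n]
    ring
  rw [zeroFOneOp_coeffSeries (norm_fmCoeff_le m), hcoeff]
  simp [coeffSeries]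

theorem derivCoeff_dmCoeff_recurrence (n : ℕ) :
    (n + (m + 1)) * derivCoeff (dmCoeff m) n - dmCoeff m n
      = m * fmCoeff m (n + 1) + 2 * derivCoeff (fmCoeff m) n := by
  have h1 : (n : ℂ) + 1 ≠ 0 := by exact_mod_cast n.succ_ne_zero
  have h2 : (n : ℂ) + m + 1 ≠ 0 := by exact_mod_cast (n + m).succ_ne_zero
  have hψ₂ := digamma_natCast_add_one_add_one (n + m)
  push_cast at hψ₂
  rw [derivCoeff, derivCoeff, dmCoeff, dmCoeff, fmCoeff_eq_mul_fmCoeff_succ m n]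
  push_cast
  rw [digamma_natCast_add_one_add_one, add_right_comm (n : ℂ) 1, hψ₂]
  field_simp
  ring

theorem mul_zeroFOneOp_coeffSeries_dmCoeff (z : ℂ) :
    z * zeroFOneOp (m + 1) (coeffSeries (dmCoeff m)) z
      = m * (coeffSeries (fmCoeff m) z - fmCoeff m 0)
        + 2 * z * deriv (coeffSeries (fmCoeff m)) z := by
  have hF := (summable_coeff_mul_pow (norm_fmCoeff_le m) z).hasSum
  have hF' := (summable_coeff_mul_pow (norm_derivCoeff_le (norm_fmCoeff_le m)) z).hasSum
  rw [← hasSum_nat_add_iff' 1, sum_range_one, pow_zero, mul_one] at hF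
  have h := (hF.mul_left (m : ℂ)).add (hF'.mul_left (2 * z))
  rw [zeroFOneOp_coeffSeries (norm_dmCoeff_le m), deriv_coeffSeries (norm_fmCoeff_le m)]
  unfold coeffSeries
  rw [← tsum_mul_left, ← h.tsum_eq]
  exact tsum_congr fun n => by dsimp only; rw [derivCoeff_dmCoeff_recurrence, pow_succ]; ring

theorem dmLaurentCoeff_succ {j : ℕ} (hj : j + 1 < m) :
    dmLaurentCoeff m (j + 1) = dmLaurentCoeff m j * ((j + 1) * (j + 1 - m)) := by
  obtain ⟨k, rfl⟩ : ∃ k, m = j + 2 + k := ⟨m - (j + 2), by omega⟩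
  rw [dmLaurentCoeff, dmLaurentCoeff, show j + 2 + k - 1 - j = k + 1 by omega,
    show j + 2 + k - 1 - (j + 1) = k by omega, Nat.factorial_succ, Nat.factorial_succ]
  have hk : (k ! : ℂ) ≠ 0 := by exact_mod_cast k.factorial_ne_zero
  have hk1 : (k : ℂ) + 1 ≠ 0 := by exact_mod_cast k.succ_ne_zero
  push_cast
  field_simp
  ring

theorem hasDerivAt_dmLaurent {z : ℂ} (hz : z ≠ 0) :
    HasDerivAt (dmLaurent m)
      (∑ j ∈ range m, dmLaurentCoeff m j * (-(j + 1 : ℤ) : ℤ) * z ^ (-(j + 1 : ℤ) - 1)) z :=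
  hasDerivAt_sum_mul_zpow _ _ _ hz

theorem analyticAt_dmLaurent {z : ℂ} (hz : z ≠ 0) : AnalyticAt ℂ (dmLaurent m) z :=
  DifferentiableOn.analyticAt
    (fun _ hw => (hasDerivAt_dmLaurent m hw).differentiableAt.differentiableWithinAt)
    (isOpen_compl_singleton.mem_nhds hz)

theorem mul_zeroFOneOp_dmLaurent {z : ℂ} (hz : z ≠ 0) :
    z * zeroFOneOp (m + 1) (dmLaurent m) z = -(m * fmCoeff m 0) := by
  have hderiv : deriv (dmLaurent m) =ᶠ[𝓝 z] fun w =>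
      ∑ j ∈ range m, dmLaurentCoeff m j * (-(j + 1 : ℤ) : ℤ) * w ^ (-(j + 1 : ℤ) - 1) := by
    filter_upwards [isOpen_compl_singleton.mem_nhds hz] with w hw
    exact (hasDerivAt_dmLaurent m hw).deriv
  have h2 := hasDerivAt_sum_mul_zpow (range m) (fun j => dmLaurentCoeff m j * (-(j + 1 : ℤ) : ℤ))
    (fun j => -(j + 1 : ℤ) - 1) hz
  -- The factor `j + 1 - m` kills the top term, so the sum telescopes against `G` cut off at `m`.
  let G : ℕ → ℂ := fun j => if j < m then dmLaurentCoeff m j * z ^ (-(j : ℤ)) else 0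
  have hterm (j : ℕ) (hj : j ∈ range m) :
      dmLaurentCoeff m j * (-(j + 1 : ℤ) : ℤ) * ((-(j + 1 : ℤ) : ℤ) - 1 + (m + 1))
        * z ^ (-(j + 1 : ℤ)) - dmLaurentCoeff m j * z ^ (-(j + 1 : ℤ) + 1) = G (j + 1) - G j := by
    have hGj1 : G (j + 1) = dmLaurentCoeff m j * ((j + 1) * (j + 1 - m)) * z ^ (-(j + 1 : ℤ)) := by
      by_cases h : j + 1 < m
      · simp only [G, if_pos h, dmLaurentCoeff_succ m h]
        push_cast
        rfl
      · have hm : (j : ℂ) + 1 - m = 0 := by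
          rw [show m = j + 1 by have := mem_range.1 hj; omega]
          push_cast
          ring
        simp [G, h, hm]
    rw [hGj1, show G j = _ from if_pos (mem_range.1 hj), neg_add, neg_add_cancel_right]
    push_cast
    ring
  rw [zeroFOneOp, hderiv.deriv_eq, h2.deriv, hderiv.eq_of_nhds, dmLaurent, mul_sum, mul_sum,
    ← sum_add_distrib, ← sum_sub_distrib, mul_sum,
    sum_congr rfl fun j _ => mul_zeroFOneOp_term_zpow hz _ _ _, sum_congr rfl hterm, sum_range_sub]
  rcases Nat.eq_zero_or_pos m with rfl | hm
  · simp [G]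
  obtain ⟨k, rfl⟩ : ∃ k, m = k + 1 := ⟨m - 1, by omega⟩
  simp [G, dmLaurentCoeff, fmCoeff, Nat.factorial_succ]
  field_simp

end Coefficients

end ZeroFOne

open ZeroFOne in
theorem log_Fm_add_Dm_solves (m : ℕ) (z : ℂ) (hz : z ∈ Complex.slitPlane) :
    z * deriv (deriv (fun w => Complex.log w * Fm m w + Dm m w)) z
      + (m + 1) * deriv (fun w => Complex.log w * Fm m w + Dm m w) z
      - (Complex.log z * Fm m z + Dm m z) = 0 := by
  have hz0 : z ≠ 0 := slitPlane_ne_zero hz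
  have hF := analyticAt_coeffSeries (norm_fmCoeff_le m) z
  have hP := analyticAt_dmLaurent m hz0
  have hG := analyticAt_coeffSeries (norm_dmCoeff_le m) z
  change zeroFOneOp (m + 1) (fun w => log w * Fm m w + Dm m w) z = 0
  simp only [Fm_eq_coeffSeries, Dm_eq_dmLaurent_sub_coeffSeries]
  rw [zeroFOneOp_add ((analyticAt_clog hz).fun_mul hF) (hP.fun_sub hG), zeroFOneOp_sub hP hG,
    zeroFOneOp_log_mul hz hF, zeroFOneOp_coeffSeries_fmCoeff, mul_zero, zero_add,
    ← mul_right_inj' hz0, mul_zero]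
  linear_combination mul_zeroFOneOp_dmLaurent m hz0 - mul_zeroFOneOp_coeffSeries_dmCoeff m z
    + m * coeffSeries (fmCoeff m) z * mul_inv_cancel₀ hz0
end

section
/- For integers m ≥ 1 and z ≠ 0, the contiguity relation m·𝐃_m(z) = 𝐃_{m−1}(z) − z·𝐃_{m+1}(z) holds. -/
open Complex

/-!
Write `𝐃_m = P_m - T_m`, with `P_m` the principal part (a polynomial in `z⁻¹`) and `T_m`
the Taylor series. Each satisfies the inhomogeneous relation
`(n+1)·X_{n+1} - X_n + z·X_{n+2} = 1/(n+1)!`, so the inhomogeneities cancel in `𝐃_m`.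
For `T_m` the relation holds coefficientwise, by `ψ(x+1) = ψ(x) + 1/x`; for `P_m` multiplication
by `z` shifts the powers of `z⁻¹` and the coefficients combine through `(n-i)/(n-i)! = 1/(n-i-1)!`.
The bound `‖ψ(n+1)‖ ≤ ‖ψ(1)‖ + n` makes the Taylor series converge everywhere.
-/

open Finset Nat

theorem digamma_eq_complex_digamma : _root_.digamma = Complex.digamma := by
  funext x
  rfl

theorem digamma_natCast_succ {n : ℕ} (hn : n ≠ 0) :
    _root_.digamma (n + 1 : ℕ) = _root_.digamma n + (n : ℂ)⁻¹ := by
  rw [digamma_eq_complex_digamma, Nat.cast_succ]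
  refine Complex.digamma_apply_add_one _ fun m h => hn ?_
  have : ((n + m : ℕ) : ℂ) = 0 := by push_cast; linear_combination h
  exact_mod_cast (Nat.add_eq_zero_iff.mp (by exact_mod_cast this)).1

theorem norm_digamma_natCast_succ_le (n : ℕ) :
    ‖_root_.digamma (n + 1 : ℕ)‖ ≤ ‖_root_.digamma 1‖ + n := by
  induction n with
  | zero => simp
  | succ n ih =>
    have hinv : ‖((n + 1 : ℕ) : ℂ)⁻¹‖ ≤ 1 := by
      rw [norm_inv, Complex.norm_natCast]
      exact inv_le_one_of_one_le₀ (by norm_cast; omega)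
    calc ‖_root_.digamma (n + 1 + 1 : ℕ)‖
        ≤ ‖_root_.digamma (n + 1 : ℕ)‖ + ‖((n + 1 : ℕ) : ℂ)⁻¹‖ := by
          rw [digamma_natCast_succ n.succ_ne_zero]
          exact norm_add_le _ _
      _ ≤ ‖_root_.digamma 1‖ + (n + 1 : ℕ) := by rw [Nat.cast_succ (R := ℝ)]; linarith

theorem summable_div_factorial_mul_pow {𝕜 : Type*} [RCLike 𝕜] {f : ℕ → 𝕜} {C r : ℝ}
    (hf : ∀ k, ‖f k‖ ≤ C * r ^ k) (z : 𝕜) : Summable fun k => f k / k ! * z ^ k := by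
  refine .of_norm_bounded ((Real.summable_pow_div_factorial (r * ‖z‖)).mul_left C) fun k => ?_
  rw [norm_mul, norm_div, norm_pow, RCLike.norm_natCast]
  calc ‖f k‖ / k ! * ‖z‖ ^ k ≤ C * r ^ k / k ! * ‖z‖ ^ k := by gcongr; exact hf k
    _ = C * ((r * ‖z‖) ^ k / k !) := by ring

noncomputable def DmPrincipalCoeff (m i : ℕ) : ℂ := (-1) ^ i * i ! / (m - 1 - i)!

noncomputable def DmCoeff (m k : ℕ) : ℂ :=
  (_root_.digamma (k + 1) + _root_.digamma (k + m + 1)) / (k.factorial * (m + k).factorial)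

theorem Dm_eq (m : ℕ) (z : ℂ) :
    Dm m z = ∑ i ∈ range m, DmPrincipalCoeff m i * z⁻¹ ^ (i + 1)
      - ∑' k, DmCoeff m k * z ^ k := by
  rw [Dm, ← Ico_add_one_right_eq_Icc, sum_Ico_eq_sum_range, Nat.add_sub_cancel]
  congr 1
  refine sum_congr rfl fun i _ => ?_
  rw [DmPrincipalCoeff, add_tsub_cancel_left, Nat.sub_sub, zpow_neg, zpow_natCast, inv_pow,
    add_comm 1 i]

theorem DmPrincipalCoeff_contiguity {n i : ℕ} (hi : i < n) :
    (n + 1) * DmPrincipalCoeff (n + 1) i + DmPrincipalCoeff (n + 2) (i + 1)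
      = DmPrincipalCoeff n i := by
  obtain ⟨d, rfl⟩ : ∃ d, n = i + d + 1 := ⟨n - i - 1, by omega⟩
  rw [DmPrincipalCoeff, DmPrincipalCoeff, DmPrincipalCoeff,
    show i + d + 1 + 1 - 1 - i = d + 1 by omega, show i + d + 1 + 2 - 1 - (i + 1) = d + 1 by omega,
    show i + d + 1 - 1 - i = d by omega, factorial_succ d, factorial_succ i]
  have : (d ! : ℂ) ≠ 0 := Nat.cast_ne_zero.mpr d.factorial_ne_zero
  have : (d : ℂ) + 1 ≠ 0 := Nat.cast_add_one_ne_zero d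
  push_cast
  field_simp
  ring

theorem DmPrincipalCoeff_contiguity_last (n : ℕ) :
    (n + 1) * DmPrincipalCoeff (n + 1) n + DmPrincipalCoeff (n + 2) (n + 1) = 0 := by
  rw [DmPrincipalCoeff, DmPrincipalCoeff, show n + 1 - 1 - n = 0 by omega,
    show n + 2 - 1 - (n + 1) = 0 by omega, factorial_succ n, pow_succ]
  push_cast
  ring

theorem sum_DmPrincipalCoeff_mul_inv_pow_contiguity (n : ℕ) {z : ℂ} (hz : z ≠ 0) :
    (n + 1) * ∑ i ∈ range (n + 1), DmPrincipalCoeff (n + 1) i * z⁻¹ ^ (i + 1)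
      - ∑ i ∈ range n, DmPrincipalCoeff n i * z⁻¹ ^ (i + 1)
      + z * ∑ i ∈ range (n + 2), DmPrincipalCoeff (n + 2) i * z⁻¹ ^ (i + 1)
      = ((n + 1)! : ℂ)⁻¹ := by
  have hshift (i : ℕ) : z * (DmPrincipalCoeff (n + 2) (i + 1) * z⁻¹ ^ (i + 1 + 1))
      = DmPrincipalCoeff (n + 2) (i + 1) * z⁻¹ ^ (i + 1) := by
    rw [pow_succ]
    linear_combination DmPrincipalCoeff (n + 2) (i + 1) * z⁻¹ ^ (i + 1) * mul_inv_cancel₀ hz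
  calc _ = ∑ i ∈ range (n + 1), ((n + 1) * DmPrincipalCoeff (n + 1) i
            + DmPrincipalCoeff (n + 2) (i + 1)) * z⁻¹ ^ (i + 1)
        - ∑ i ∈ range n, DmPrincipalCoeff n i * z⁻¹ ^ (i + 1) + DmPrincipalCoeff (n + 2) 0 := by
        rw [sum_range_succ' _ (n + 1), mul_add, mul_sum, mul_sum, zero_add, pow_one,
          ← mul_assoc z, mul_comm z, mul_assoc, mul_inv_cancel₀ hz, mul_one]
        simp only [hshift, add_mul, sum_add_distrib, mul_assoc]
        ring
    _ = DmPrincipalCoeff (n + 2) 0 := by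
        rw [sum_range_succ, DmPrincipalCoeff_contiguity_last, zero_mul, add_zero,
          sum_congr rfl fun i hi => by rw [DmPrincipalCoeff_contiguity (mem_range.mp hi)],
          sub_self, zero_add]
    _ = ((n + 1)! : ℂ)⁻¹ := by simp [DmPrincipalCoeff]

theorem DmCoeff_eq_natCast (m k : ℕ) :
    DmCoeff m k = (_root_.digamma (k + 1 : ℕ) + _root_.digamma (k + m + 1 : ℕ)) /
      ((k ! : ℂ) * (m + k)!) := by
  simp [DmCoeff]

theorem summable_DmCoeff_mul_pow (m : ℕ) (z : ℂ) : Summable fun k => DmCoeff m k * z ^ k := by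
  set C := ‖_root_.digamma 1‖
  have hbound (k : ℕ) : ‖(_root_.digamma (k + 1 : ℕ) + _root_.digamma (k + m + 1 : ℕ)) /
      (m + k)!‖ ≤ (2 * C + m + 2) * 2 ^ k := by
    have hk : (k : ℝ) + 1 ≤ 2 ^ k := by exact_mod_cast Nat.lt_two_pow_self
    have hfac : (1 : ℝ) ≤ (m + k)! := by exact_mod_cast (m + k).factorial_pos
    calc _ ≤ ‖_root_.digamma (k + 1 : ℕ) + _root_.digamma (k + m + 1 : ℕ)‖ := by
          rw [norm_div, Complex.norm_natCast]
          exact div_le_self (norm_nonneg _) hfac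
      _ ≤ ‖_root_.digamma (k + 1 : ℕ)‖ + ‖_root_.digamma (k + m + 1 : ℕ)‖ := norm_add_le _ _
      _ ≤ (2 * C + m + 2) * 2 ^ k := by
          have h₁ := norm_digamma_natCast_succ_le k
          have h₂ : ‖_root_.digamma (k + m + 1 : ℕ)‖ ≤ C + (k + m) := by
            exact_mod_cast norm_digamma_natCast_succ_le (k + m)
          nlinarith [mul_nonneg (by positivity : 0 ≤ 2 * C + m)
            (sub_nonneg.mpr (one_le_pow₀ (n := k) (by norm_num : (1 : ℝ) ≤ 2)))]
  refine (summable_div_factorial_mul_pow hbound z).congr fun k => ?_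
  rw [DmCoeff_eq_natCast, div_div, mul_comm (k ! : ℂ)]

theorem DmCoeff_contiguity_zero (n : ℕ) :
    (n + 1) * DmCoeff (n + 1) 0 - DmCoeff n 0 = ((n + 1)! : ℂ)⁻¹ := by
  rw [DmCoeff_eq_natCast, DmCoeff_eq_natCast, show 0 + (n + 1) + 1 = n + 1 + 1 by omega,
    show 0 + n + 1 = n + 1 by omega, digamma_natCast_succ n.succ_ne_zero, add_zero, add_zero,
    factorial_succ]
  have : (n ! : ℂ) ≠ 0 := Nat.cast_ne_zero.mpr n.factorial_ne_zero
  have : (n : ℂ) + 1 ≠ 0 := Nat.cast_add_one_ne_zero n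
  push_cast at *
  field_simp
  ring

theorem DmCoeff_contiguity_succ (n k : ℕ) :
    (n + 1) * DmCoeff (n + 1) (k + 1) - DmCoeff n (k + 1) + DmCoeff (n + 2) k = 0 := by
  rw [DmCoeff_eq_natCast, DmCoeff_eq_natCast, DmCoeff_eq_natCast,
    show k + 1 + (n + 1) + 1 = n + k + 2 + 1 by omega, show k + 1 + n + 1 = n + k + 2 by omega,
    show k + (n + 2) + 1 = n + k + 2 + 1 by omega, show n + 1 + (k + 1) = n + k + 1 + 1 by omega,
    show n + (k + 1) = n + k + 1 by omega, show n + 2 + k = n + k + 1 + 1 by omega,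
    digamma_natCast_succ (n := k + 1) (by omega),
    digamma_natCast_succ (n := n + k + 2) (by omega),
    factorial_succ (n + k + 1), factorial_succ k]
  have : (k ! : ℂ) ≠ 0 := Nat.cast_ne_zero.mpr k.factorial_ne_zero
  have : ((n + k + 1)! : ℂ) ≠ 0 := Nat.cast_ne_zero.mpr (n + k + 1).factorial_ne_zero
  have : (k : ℂ) + 1 ≠ 0 := Nat.cast_add_one_ne_zero k
  have : ((n + k + 2 : ℕ) : ℂ) ≠ 0 := Nat.cast_ne_zero.mpr (by omega)
  have : ((n + k + 1 + 1 : ℕ) : ℂ) ≠ 0 := Nat.cast_ne_zero.mpr (by omega)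
  push_cast at *
  field_simp
  ring

theorem tsum_DmCoeff_mul_pow_contiguity (n : ℕ) (z : ℂ) :
    (n + 1) * ∑' k, DmCoeff (n + 1) k * z ^ k - ∑' k, DmCoeff n k * z ^ k
      + z * ∑' k, DmCoeff (n + 2) k * z ^ k = ((n + 1)! : ℂ)⁻¹ := by
  have hs (m : ℕ) := summable_DmCoeff_mul_pow m z
  have hs' (m : ℕ) := (summable_nat_add_iff 1).mpr (hs m)
  have hterm (k : ℕ) : (n + 1) * (DmCoeff (n + 1) (k + 1) * z ^ (k + 1))
      - DmCoeff n (k + 1) * z ^ (k + 1) + z * (DmCoeff (n + 2) k * z ^ k) = 0 := by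
    linear_combination z ^ (k + 1) * DmCoeff_contiguity_succ n k
  rw [(hs (n + 1)).tsum_eq_zero_add, (hs n).tsum_eq_zero_add, ← tsum_mul_left, mul_add,
    ← tsum_mul_left]
  calc _ = ((n + 1) * DmCoeff (n + 1) 0 - DmCoeff n 0)
        + ∑' k, ((n + 1) * (DmCoeff (n + 1) (k + 1) * z ^ (k + 1))
          - DmCoeff n (k + 1) * z ^ (k + 1) + z * (DmCoeff (n + 2) k * z ^ k)) := by
        rw [((hs' (n + 1)).mul_left _ |>.sub (hs' n)).tsum_add ((hs (n + 2)).mul_left z),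
          ((hs' (n + 1)).mul_left _).tsum_sub (hs' n)]
        simp only [pow_zero, mul_one]
        ring
    _ = ((n + 1)! : ℂ)⁻¹ := by simp only [hterm, tsum_zero, add_zero, DmCoeff_contiguity_zero]

theorem Dm_contiguity (m : ℕ) (hm : 1 ≤ m) (z : ℂ) (hz : z ≠ 0) :
    (m : ℂ) * Dm m z = Dm (m - 1) z - z * Dm (m + 1) z := by
  obtain ⟨n, rfl⟩ : ∃ n, m = n + 1 := ⟨m - 1, by omega⟩
  rw [Nat.add_sub_cancel, Dm_eq, Dm_eq, Dm_eq]
  push_cast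
  linear_combination sum_DmPrincipalCoeff_mul_inv_pow_contiguity n hz
    - tsum_DmCoeff_mul_pow_contiguity n z
end

section
/- For all complex z, the quadratic relation 𝐅(c; z²) · Γ(c) = e^{−2z} · F(c − 1/2; 2c − 1; 4z) holds between the 0F1 and 1F1 functions, i.e. F(c; z²) = e^{−2z} F((2c−1)/2; 2c−1; 4z), whenever c and 2c−1 are not nonpositive integers. -/
/-!
Write `Φ c` for the Taylor series of `e^{2z} 𝐅(c; z²)` and `Ψ c` for that of
`F(c - 1/2; 2c - 1; 4z)`. Both satisfy the differential-difference equation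
`Φ c' = 2 Φ c + (2 / c) X Φ (c + 1)` with constant term `1`: for `Φ` this is the Leibniz rule
together with `𝐅'(c; x) = 𝐅(c + 1; x) / c`, for `Ψ` it is a contiguous relation between
Pochhammer symbols. The equation determines coefficient `n + 1` of `Φ c` from the coefficients
of index `≤ n` of `Φ c` and `Φ (c + 1)`, so `Φ c = Ψ c`. Evaluating at `z`, with a Cauchy
product for `e^{2z} · 𝐅(c; z²)`, gives the identity.
-/

open Complex

/-- The ₀F₁ function `F(c; z) = ∑ zⁿ/((c)ₙ·n!)`. -/
noncomputable def F01 (c z : ℂ) : ℂ := ∑' n : ℕ, z ^ n / (poch c n * n.factorial)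

/-- The ₁F₁ (confluent) function `F(a; c; z) = ∑ (a)ₙ zⁿ/((c)ₙ·n!)`. -/
noncomputable def F11 (a c z : ℂ) : ℂ := ∑' n : ℕ, poch a n * z ^ n / (poch c n * n.factorial)

open PowerSeries

lemma poch_zero (a : ℂ) : poch a 0 = 1 := by simp [poch]

lemma poch_succ (a : ℂ) (n : ℕ) : poch a (n + 1) = poch a n * (a + n) := by
  simp [poch, ascPochhammer_succ_eval]

lemma poch_succ' (a : ℂ) (n : ℕ) : poch a (n + 1) = a * poch (a + 1) n := by
  simp [poch, ascPochhammer_succ_left, Polynomial.eval_comp]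

lemma poch_ne_zero {a : ℂ} (ha : ∀ k : ℕ, a ≠ -(k : ℂ)) (n : ℕ) : poch a n ≠ 0 := by
  rw [poch, Ne, ascPochhammer_eval_eq_zero_iff]
  rintro ⟨k, -, hk⟩
  exact ha k (by rw [hk, neg_neg])

section ShiftODE

variable {K : Type*} [CommRing K]

def SolvesShiftODE (a b : K → K) (Φ : K → K⟦X⟧) (c : K) : Prop :=
  d⁄dX K (Φ c) = a c • Φ c + b c • (X * Φ (c + 1))

theorem SolvesShiftODE.eqOn [IsDomain K] [CharZero K] {a b : K → K} {Φ Ψ : K → K⟦X⟧} {s : Set K}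
    (hs : ∀ c ∈ s, c + 1 ∈ s) (hΦ : ∀ c ∈ s, SolvesShiftODE a b Φ c)
    (hΨ : ∀ c ∈ s, SolvesShiftODE a b Ψ c)
    (h0 : ∀ c ∈ s, constantCoeff (Φ c) = constantCoeff (Ψ c)) : Set.EqOn Φ Ψ s := by
  suffices h : ∀ n, ∀ c ∈ s, coeff n (Φ c) = coeff n (Ψ c) from
    fun c hc => ext fun n => h n c hc
  intro n
  induction n using Nat.strong_induction_on with
  | _ n ih =>
  intro c hc
  rcases n with _ | n
  · simpa using h0 c hc
  have hX : coeff n (X * Φ (c + 1)) = coeff n (X * Ψ (c + 1)) := by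
    rcases n with _ | m
    · simp
    · simpa only [coeff_succ_X_mul] using ih m (by omega) _ (hs c hc)
  have hΦn := congrArg (coeff n) (hΦ c hc)
  have hΨn := congrArg (coeff n) (hΨ c hc)
  simp only [coeff_derivative, map_add, coeff_smul, smul_eq_mul] at hΦn hΨn
  rw [ih n n.lt_succ_self c hc, hX, ← hΨn] at hΦn
  exact mul_right_cancel₀ n.cast_add_one_ne_zero hΦn

end ShiftODE

lemma derivative_rescale {R : Type*} [CommSemiring R] (a : R) (f : R⟦X⟧) :
    d⁄dX R (rescale a f) = a • rescale a (d⁄dX R f) := by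
  ext n
  simp only [coeff_derivative, coeff_rescale, coeff_smul, smul_eq_mul, pow_succ]
  ring

noncomputable def F01Series (c : ℂ) : ℂ⟦X⟧ := mk fun n => (poch c n * n.factorial)⁻¹

noncomputable def F11Series (a b : ℂ) : ℂ⟦X⟧ := mk fun n => poch a n / (poch b n * n.factorial)

/-- The Taylor series of `e^{2z} 𝐅(c; z²)`. -/
noncomputable def expF01Series (c : ℂ) : ℂ⟦X⟧ :=
  rescale 2 (PowerSeries.exp ℂ) * expand 2 two_ne_zero (F01Series c)

/-- The Taylor series of `F(c - 1/2; 2c - 1; 4z)`. -/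
noncomputable def kummerSeries (c : ℂ) : ℂ⟦X⟧ := rescale 4 (F11Series (c - 1 / 2) (2 * c - 1))

lemma derivative_F01Series (c : ℂ) : d⁄dX ℂ (F01Series c) = c⁻¹ • F01Series (c + 1) := by
  ext n
  have hn : (n + 1 : ℂ) ≠ 0 := n.cast_add_one_ne_zero
  simp only [coeff_derivative, F01Series, coeff_mk, coeff_smul, smul_eq_mul, poch_succ',
    Nat.factorial_succ, Nat.cast_mul, Nat.cast_succ, mul_inv]
  field_simp

lemma solvesShiftODE_expF01Series (c : ℂ) :
    SolvesShiftODE (fun _ => 2) (fun c => 2 / c) expF01Series c := by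
  have hE : d⁄dX ℂ (rescale 2 (PowerSeries.exp ℂ)) = (2 : ℂ) • rescale 2 (PowerSeries.exp ℂ) := by
    rw [derivative_rescale, derivative_exp]
  have hG : d⁄dX ℂ (expand 2 two_ne_zero (F01Series c)) =
      (2 / c) • (X * expand 2 two_ne_zero (F01Series (c + 1))) := by
    rw [expand_apply, derivative_subst (HasSubst.X_pow two_ne_zero), derivative_F01Series,
      ← expand_apply 2 two_ne_zero, map_smul, expand_apply, derivative_pow, derivative_X]
    simp only [smul_eq_C_mul, div_eq_mul_inv, map_mul, map_ofNat]
    ring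
  simp only [SolvesShiftODE, expF01Series, Derivation.leibniz, hE, hG, smul_eq_mul, smul_eq_C_mul]
  ring

lemma coeff_kummerSeries (c : ℂ) (n : ℕ) :
    coeff n (kummerSeries c) = 4 ^ n * poch (c - 1 / 2) n / (poch (2 * c - 1) n * n.factorial) := by
  simp [kummerSeries, F11Series, coeff_rescale, mul_div_assoc]

lemma coeff_kummerSeries_add_two (c : ℂ) (n : ℕ) (h : poch (2 * c - 1) (n + 2) ≠ 0) :
    coeff (n + 2) (kummerSeries c) * (n + 2) =
      2 * coeff (n + 1) (kummerSeries c) + 2 / c * coeff n (kummerSeries (c + 1)) := by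
  have hA1 : poch (c - 1 / 2) (n + 1) = (2 * c - 1) / 2 * poch (c + 1 / 2) n := by
    rw [poch_succ', show c - 1 / 2 + 1 = c + 1 / 2 by ring]
    ring
  have hA2 : poch (c - 1 / 2) (n + 2) = (2 * c - 1) / 2 * poch (c + 1 / 2) n * (c + 1 / 2 + n) := by
    rw [poch_succ, hA1]
    push_cast
    ring
  have hC1 : poch (2 * c - 1) (n + 1) = (2 * c - 1) * poch (2 * c) n := by
    rw [poch_succ', show 2 * c - 1 + 1 = 2 * c by ring]
  have hC2 : poch (2 * c - 1) (n + 2) = (2 * c - 1) * poch (2 * c) n * (2 * c + n) := by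
    rw [poch_succ, hC1]
    push_cast
    ring
  have hBC : 2 * c * poch (2 * c + 1) n = poch (2 * c) n * (2 * c + n) := by
    rw [← poch_succ', poch_succ]
  rw [coeff_kummerSeries, coeff_kummerSeries, coeff_kummerSeries, hA2, hA1, hC2, hC1,
    show c + 1 - 1 / 2 = c + 1 / 2 by ring, show 2 * (c + 1) - 1 = 2 * c + 1 by ring,
    Nat.factorial_succ, Nat.factorial_succ]
  rw [hC2] at h
  generalize poch (c + 1 / 2) n = A at *
  generalize poch (2 * c) n = C at *
  generalize poch (2 * c + 1) n = B at *
  obtain ⟨h12, hn⟩ := mul_ne_zero_iff.mp h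
  obtain ⟨h1, hC⟩ := mul_ne_zero_iff.mp h12
  have hc : c ≠ 0 := by
    rintro rfl
    simp_all
  obtain rfl : B = C * (2 * c + n) / (2 * c) := by
    field_simp
    linear_combination hBC
  have hf : (n.factorial : ℂ) ≠ 0 := Nat.cast_ne_zero.mpr n.factorial_ne_zero
  have hn2 : (n : ℂ) + 1 + 1 ≠ 0 := by exact_mod_cast (n + 1).succ_ne_zero
  push_cast
  field_simp
  ring

lemma solvesShiftODE_kummerSeries {c : ℂ} (hc : ∀ k : ℕ, 2 * c - 1 ≠ -(k : ℂ)) :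
    SolvesShiftODE (fun _ => 2) (fun c => 2 / c) kummerSeries c := by
  ext n
  simp only [coeff_derivative, map_add, coeff_smul, smul_eq_mul]
  rcases n with _ | n
  · have h : 2 * c - 1 ≠ 0 := by simpa using hc 0
    rw [coeff_zero_X_mul, coeff_kummerSeries, coeff_kummerSeries]
    norm_num [poch_succ, poch_zero]
    rw [div_eq_iff h]
    ring
  · rw [coeff_succ_X_mul, ← coeff_kummerSeries_add_two c n (poch_ne_zero hc _)]
    push_cast
    ring

theorem expF01Series_eq_kummerSeries {c : ℂ} (hc : ∀ k : ℕ, 2 * c - 1 ≠ -(k : ℂ)) :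
    expF01Series c = kummerSeries c := by
  refine SolvesShiftODE.eqOn (s := {c | ∀ k : ℕ, 2 * c - 1 ≠ -(k : ℂ)}) ?_
    (fun c _ => solvesShiftODE_expF01Series c) (fun c hc => solvesShiftODE_kummerSeries hc)
    ?_ hc
  · intro c hc k hk
    exact hc (k + 2) (by push_cast; linear_combination hk)
  · intro c _
    rw [← coeff_zero_eq_constantCoeff_apply, ← coeff_zero_eq_constantCoeff_apply,
      coeff_kummerSeries, expF01Series, coeff_mul]
    simp [F01Series, coeff_exp, poch_zero]

lemma tsum_coeff_mul_mul_pow {R : Type*} [NormedCommRing R] [CompleteSpace R] {f g : R⟦X⟧} {z : R}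
    (hf : Summable fun n => ‖coeff n f * z ^ n‖) (hg : Summable fun n => ‖coeff n g * z ^ n‖) :
    ∑' n, coeff n (f * g) * z ^ n = (∑' n, coeff n f * z ^ n) * ∑' n, coeff n g * z ^ n := by
  rw [tsum_mul_tsum_eq_tsum_sum_antidiagonal_of_summable_norm hf hg]
  refine tsum_congr fun n => ?_
  rw [coeff_mul, Finset.sum_mul]
  refine Finset.sum_congr rfl fun p hp => ?_
  rw [← Finset.HasAntidiagonal.mem_antidiagonal.mp hp, pow_add]
  ring

section Expand

variable {R : Type*} [NormedCommRing R] {p : ℕ} (hp : p ≠ 0) (f : R⟦X⟧) (z : R)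

lemma coeff_expand_mul_pow_of_notMem_range {n : ℕ} (hn : n ∉ Set.range (p * ·)) :
    coeff n (expand p hp f) * z ^ n = 0 := by
  rw [coeff_expand_of_not_dvd _ _ _ fun ⟨k, hk⟩ => hn ⟨k, hk.symm⟩, zero_mul]

lemma coeff_expand_mul_pow_comp_mul :
    (fun n => coeff n (expand p hp f) * z ^ n) ∘ (p * ·) = fun n => coeff n f * (z ^ p) ^ n := by
  ext n
  simp only [Function.comp_apply, coeff_expand_mul, pow_mul]

lemma hasSum_coeff_expand_mul_pow_iff {s : R} :
    HasSum (fun n => coeff n (expand p hp f) * z ^ n) s ↔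
      HasSum (fun n => coeff n f * (z ^ p) ^ n) s := by
  rw [← coeff_expand_mul_pow_comp_mul hp, (mul_right_injective₀ hp).hasSum_iff
    fun n hn => coeff_expand_mul_pow_of_notMem_range hp f z hn]

lemma summable_norm_coeff_expand_mul_pow_iff :
    Summable (fun n => ‖coeff n (expand p hp f) * z ^ n‖) ↔
      Summable (fun n => ‖coeff n f * (z ^ p) ^ n‖) := by
  rw [← (mul_right_injective₀ hp).summable_iff
    fun n hn => by rw [coeff_expand_mul_pow_of_notMem_range hp f z hn, norm_zero]]
  simp only [Function.comp_def, coeff_expand_mul, pow_mul]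

end Expand

lemma coeff_rescale_exp_mul_pow (a z : ℂ) (n : ℕ) :
    coeff n (rescale a (PowerSeries.exp ℂ)) * z ^ n = (a * z) ^ n / n.factorial := by
  simp [coeff_rescale, coeff_exp, mul_pow]
  ring

lemma summable_norm_coeff_rescale_exp_mul_pow (a z : ℂ) :
    Summable fun n => ‖coeff n (rescale a (PowerSeries.exp ℂ)) * z ^ n‖ := by
  refine (Real.summable_pow_div_factorial ‖a * z‖).congr fun n => ?_
  rw [coeff_rescale_exp_mul_pow, norm_div, norm_pow, Complex.norm_natCast]

lemma tsum_coeff_rescale_exp_mul_pow (a z : ℂ) :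
    ∑' n, coeff n (rescale a (PowerSeries.exp ℂ)) * z ^ n = Complex.exp (a * z) := by
  simp only [coeff_rescale_exp_mul_pow, Complex.exp_eq_exp_ℂ, NormedSpace.exp_eq_tsum_div]

lemma coeff_F01Series_mul_pow (c w : ℂ) (n : ℕ) :
    coeff n (F01Series c) * w ^ n = w ^ n / (poch c n * n.factorial) := by
  rw [F01Series, coeff_mk, div_eq_mul_inv, mul_comm]

lemma summable_norm_coeff_F01Series_mul_pow (c w : ℂ) :
    Summable fun n => ‖coeff n (F01Series c) * w ^ n‖ := by
  simp only [coeff_F01Series_mul_pow]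
  refine summable_of_ratio_norm_eventually_le (r := 1 / 2) (by norm_num) ?_
  obtain ⟨N, hN⟩ := exists_nat_gt (2 * ‖w‖ + ‖c‖)
  filter_upwards [Filter.eventually_ge_atTop N] with n hn
  have hterm : w ^ (n + 1) / (poch c (n + 1) * (n + 1).factorial) =
      w ^ n / (poch c n * n.factorial) * (w / ((c + n) * (n + 1))) := by
    rw [poch_succ, Nat.factorial_succ, pow_succ, div_mul_div_comm]
    push_cast
    ring
  have hlarge : 2 * ‖w‖ < ‖(c + n) * (n + 1)‖ := by
    have hcn : (n : ℝ) - ‖c‖ ≤ ‖c + n‖ := by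
      simpa [add_comm] using norm_sub_norm_le (n : ℂ) (-c)
    have hN' : (N : ℝ) ≤ n := by exact_mod_cast hn
    rw [norm_mul, show (n : ℂ) + 1 = ((n + 1 : ℕ) : ℂ) by push_cast; ring, Complex.norm_natCast]
    push_cast
    nlinarith [norm_nonneg (c + n)]
  rw [norm_norm, norm_norm, hterm, norm_mul, mul_comm (1 / 2 : ℝ)]
  gcongr
  rw [norm_div, div_le_iff₀ (by linarith [norm_nonneg w])]
  linarith

lemma hasSum_coeff_F01Series_mul_pow (c w : ℂ) :
    HasSum (fun n => coeff n (F01Series c) * w ^ n) (F01 c w) := by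
  simpa only [coeff_F01Series_mul_pow, F01] using
    (summable_norm_coeff_F01Series_mul_pow c w).of_norm.hasSum

lemma F11_mul_eq_tsum (a b t z : ℂ) :
    F11 a b (t * z) = ∑' n, coeff n (rescale t (F11Series a b)) * z ^ n := by
  simp only [F11, F11Series, coeff_rescale, coeff_mk]
  exact tsum_congr fun n => by ring

theorem quadratic_relation_0F1_1F1_general (c z : ℂ)
    (hc' : ∀ k : ℕ, 2 * c - 1 ≠ -(k : ℂ)) :
    F01 c (z ^ 2) = Complex.exp (-2 * z) * F11 (c - 1 / 2) (2 * c - 1) (4 * z) := by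
  have hF01 := (hasSum_coeff_expand_mul_pow_iff two_ne_zero (F01Series c) z).mpr
    (hasSum_coeff_F01Series_mul_pow c (z ^ 2))
  have hF01_norm := (summable_norm_coeff_expand_mul_pow_iff two_ne_zero (F01Series c) z).mpr
    (summable_norm_coeff_F01Series_mul_pow c (z ^ 2))
  have key : Complex.exp (2 * z) * F01 c (z ^ 2) = F11 (c - 1 / 2) (2 * c - 1) (4 * z) := by
    rw [← tsum_coeff_rescale_exp_mul_pow, ← hF01.tsum_eq,
      ← tsum_coeff_mul_mul_pow (summable_norm_coeff_rescale_exp_mul_pow 2 z) hF01_norm,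
      ← expF01Series, expF01Series_eq_kummerSeries hc', F11_mul_eq_tsum, kummerSeries]
  rw [← key, ← mul_assoc, ← Complex.exp_add]
  simp

theorem quadratic_relation_0F1_1F1 (c z : ℂ)
    (hc : ∀ k : ℕ, c ≠ -(k : ℂ)) (hc' : ∀ k : ℕ, 2 * c - 1 ≠ -(k : ℂ)) :
    F01 c (z ^ 2) = Complex.exp (-2 * z) * F11 (c - 1 / 2) (2 * c - 1) (4 * z) :=
  quadratic_relation_0F1_1F1_general c z hc'
end

section
/- The derivative of the reciprocal Gamma function at a nonpositive integer −n equals (−1)^n · n!, i.e. d/dz (1/Γ(z)) evaluated at z = −n is (−1)^n n! for n = 0, 1, 2, …. -/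
/-!
Euler's reflection formula `Γ(z) Γ(1 - z) = π / sin (π z)` gives `1 / Γ(z) = sin (π z) Γ(1 - z) / π`
on a neighbourhood of `-n`, where `Γ(1 - z)` stays close to `Γ(1 + n) = n! ≠ 0`. At `-n` the factor
`sin (π z)` vanishes with derivative `π cos (π n) = π (-1)ⁿ`, so the product rule gives `(-1)ⁿ n!`.
-/

open Complex

open scoped Real Nat Topology

namespace Complex

lemma inv_Gamma_eq_of_Gamma_one_sub_ne_zero {z : ℂ} (h : Gamma (1 - z) ≠ 0) :
    (Gamma z)⁻¹ = sin (π * z) * Gamma (1 - z) / π := by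
  have hπ : (π : ℂ) ≠ 0 := ofReal_ne_zero.mpr Real.pi_ne_zero
  have reflection := Gamma_mul_Gamma_one_sub z
  by_cases hsin : sin (π * z) = 0
  -- `x / 0 = 0`, so the reflection formula forces `Γ z = 0` and both sides vanish
  · rw [hsin, div_zero, mul_eq_zero, or_iff_left h] at reflection
    simp [reflection, hsin]
  · refine inv_eq_of_mul_eq_one_right ?_
    rw [← mul_div_assoc, mul_left_comm, reflection, mul_div_cancel₀ _ hsin, div_self hπ]

lemma inv_Gamma_eventuallyEq_sin_mul_Gamma_one_sub {z₀ : ℂ} (h : Gamma (1 - z₀) ≠ 0) :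
    (fun z => (Gamma z)⁻¹) =ᶠ[𝓝 z₀] fun z => sin (π * z) * Gamma (1 - z) / π := by
  have hdiff : DifferentiableAt ℂ Gamma (1 - z₀) :=
    differentiableAt_Gamma _ fun m hm => h (hm ▸ Gamma_neg_nat_eq_zero m)
  have hcont : ContinuousAt (fun z => Gamma (1 - z)) z₀ :=
    hdiff.continuousAt.comp (by fun_prop)
  filter_upwards [hcont.eventually_ne h] with z hz
  exact inv_Gamma_eq_of_Gamma_one_sub_ne_zero hz

lemma Gamma_one_sub_neg_nat (n : ℕ) : Gamma (1 - -n) = n ! := by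
  rw [sub_neg_eq_add, add_comm, Gamma_nat_eq_factorial]

lemma sin_pi_mul_neg_nat (n : ℕ) : sin (π * -n) = 0 := by
  simpa [mul_comm] using sin_int_mul_pi (-n)

lemma cos_pi_mul_neg_nat (n : ℕ) : cos (π * -n) = (-1) ^ n := by
  rw [mul_neg, cos_neg, mul_comm]
  exact_mod_cast congrArg ((↑) : ℝ → ℂ) (Real.cos_nat_mul_pi n)

lemma hasDerivAt_sin_mul_Gamma_one_sub_neg_nat (n : ℕ) :
    HasDerivAt (fun z => sin (π * z) * Gamma (1 - z) / π) ((-1) ^ n * n !) (-n) := by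
  have hsin : HasDerivAt (fun z => sin (π * z)) (cos (π * -n) * π) (-n) :=
    (hasDerivAt_sin _).comp _ ((hasDerivAt_id _).const_mul _ |>.congr_deriv (mul_one _))
  have hΓ : DifferentiableAt ℂ (fun z => Gamma (1 - z)) (-n) := by
    refine DifferentiableAt.comp _ ?_ (by fun_prop)
    simpa [sub_neg_eq_add, add_comm] using differentiableAt_Gamma_nat_add_one n
  refine ((hsin.mul hΓ.hasDerivAt).div_const _).congr_deriv ?_
  rw [sin_pi_mul_neg_nat, cos_pi_mul_neg_nat, Gamma_one_sub_neg_nat]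
  field_simp
  ring

end Complex

theorem deriv_one_div_Gamma_neg_nat (n : ℕ) :
    deriv (fun z : ℂ => (Complex.Gamma z)⁻¹) (-(n : ℂ)) = (-1) ^ n * n.factorial := by
  have hΓ : Gamma (1 - -n) ≠ 0 := by
    rw [Gamma_one_sub_neg_nat]; exact_mod_cast n.factorial_ne_zero
  rw [(inv_Gamma_eventuallyEq_sin_mul_Gamma_one_sub hΓ).deriv_eq]
  exact (hasDerivAt_sin_mul_Gamma_one_sub_neg_nat n).deriv
end
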